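/- arXiv:2403.15578 — 2 statements merged into one kernel-verified Lean document; each statement's English description precedes it below -/
import Mathlib

section
/- Let k ≥ 2 and 1 ≤ r < k-1 be integers with r not dividing k-1, and suppose diam(K(2k+r,k)) = 2p for some p ≥ 1. Then two k-subsets A, B of [2k+r] are at distance exactly 2p in K(2k+r,k) if and only if rp - r + 1 ≤ |A ∩ B| ≤ k - rp + r - 1. -/
/-- The Kneser graph: vertices are the `k`-subsets of `[n]`, adjacency is disjointness. -/
def kneserGraph (n k : ℕ) : SimpleGraph {A : Finset (Fin n) // A.card = k} where
  Adj A B := A ≠ B ∧ Disjoint A.1 B.1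
  symm := ⟨fun A B h => ⟨h.1.symm, h.2.symm⟩⟩
  loopless := ⟨fun A h => h.1 rfl⟩

/-- The exact distance-`d` graph of a graph `G`. -/
def exactDistanceGraph {V : Type*} (G : SimpleGraph V) (d : ℕ) : SimpleGraph V where
  Adj A B := A ≠ B ∧ G.dist A B = d
  symm := ⟨fun A B h => ⟨h.1.symm, by rw [SimpleGraph.dist_comm]; exact h.2⟩⟩
  loopless := ⟨fun A h => h.1 rfl⟩

/-!
Write `s = |A ∩ B|`. One step in `K(2k+r, k)` turns the intersection size with a fixed `B`
into a value between `k - r - s` and `k - s`, so a walk of length `2m` from `A` to `B` forces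
`s ≥ k - rm` and one of length `2m + 1` forces `s ≤ rm`; choosing neighbours greedily shows that
both bounds are attained. Hence `dist(A, B) ≥ 2p` exactly when `r(p-1) < s < k - r(p-1)`, and the
diameter gives `dist(A, B) ≤ 2p`.
-/

open Finset SimpleGraph

namespace kneserGraph

variable {n k r : ℕ}

lemma adj_of_disjoint (hk : k ≠ 0) {A C : {A : Finset (Fin n) // A.card = k}}
    (h : Disjoint A.1 C.1) : (kneserGraph n k).Adj A C := by
  refine ⟨?_, h⟩
  rintro rfl
  rw [disjoint_self_iff_empty] at h
  exact hk (by simp [← A.2, h])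

lemma card_inter_add_card_inter_le {A C : {A : Finset (Fin n) // A.card = k}}
    (hAC : (kneserGraph n k).Adj A C) (B : Finset (Fin n)) :
    #(A.1 ∩ B) + #(C.1 ∩ B) ≤ #B := by
  rw [← card_union_of_disjoint (hAC.2.mono inter_subset_left inter_subset_left),
    ← union_inter_distrib_right]
  exact card_le_card inter_subset_right

lemma card_compl (A : {A : Finset (Fin (2 * k + r)) // A.card = k}) : #A.1ᶜ = k + r := by
  rw [Finset.card_compl, A.2, Fintype.card_fin]
  omega

lemma le_card_inter_add_card_inter_add {A C : {A : Finset (Fin (2 * k + r)) // A.card = k}}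
    (hAC : (kneserGraph (2 * k + r) k).Adj A C) (B : Finset (Fin (2 * k + r))) :
    #B ≤ #(A.1 ∩ B) + #(C.1 ∩ B) + r := by
  have hcover : B ⊆ (A.1 ∩ B ∪ C.1 ∩ B) ∪ (A.1 ∪ C.1)ᶜ := by
    intro x hx
    by_cases hxA : x ∈ A.1 <;> by_cases hxC : x ∈ C.1 <;> simp [*]
  have hcompl : #(A.1 ∪ C.1)ᶜ = r := by
    rw [Finset.card_compl, card_union_of_disjoint hAC.2, A.2, C.2, Fintype.card_fin]
    omega
  calc #B ≤ #(A.1 ∩ B ∪ C.1 ∩ B) + #(A.1 ∪ C.1)ᶜ :=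
        (card_le_card hcover).trans (card_union_le _ _)
    _ ≤ #(A.1 ∩ B) + #(C.1 ∩ B) + r := by rw [hcompl]; gcongr; exact card_union_le _ _

/-- Each step of a walk changes `|A ∩ B|` into at least `k - r - |A ∩ B|` and at most
`k - |A ∩ B|`, which gives these bounds at the two parities. -/
lemma card_inter_bounds_of_walk {A B : {A : Finset (Fin (2 * k + r)) // A.card = k}}
    (w : (kneserGraph (2 * k + r) k).Walk A B) (m : ℕ) :
    (w.length = 2 * m → k ≤ #(A.1 ∩ B.1) + r * m) ∧
      (w.length = 2 * m + 1 → #(A.1 ∩ B.1) ≤ r * m) := by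
  induction w generalizing m with
  | nil =>
    rename_i A
    refine ⟨fun _ => ?_, fun h => by simp at h⟩
    rw [inter_self, A.2]
    omega
  | cons hAC w ih =>
    rename_i A C B
    have hlow := le_card_inter_add_card_inter_add hAC B.1
    have hhigh := card_inter_add_card_inter_le hAC B.1
    rw [B.2] at hlow hhigh
    refine ⟨fun h => ?_, fun h => ?_⟩
    · obtain ⟨j, rfl⟩ : ∃ j, m = j + 1 := ⟨m - 1, by simp at h; omega⟩
      have := (ih j).2 (by simp at h; omega)
      rw [Nat.mul_succ]
      omega
    · have := (ih m).1 (by simp at h; omega)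
      omega

lemma two_mul_add_two_le_dist {A B : {A : Finset (Fin (2 * k + r)) // A.card = k}} {m : ℕ}
    (hAB : (kneserGraph (2 * k + r) k).Reachable A B) (h₁ : r * m < #(A.1 ∩ B.1))
    (h₂ : #(A.1 ∩ B.1) + r * m < k) : 2 * (m + 1) ≤ (kneserGraph (2 * k + r) k).dist A B := by
  obtain ⟨w, hw⟩ := hAB.exists_walk_length_eq_dist
  rw [← hw]
  obtain ⟨j, hj | hj⟩ := Nat.even_or_odd' w.length
  · have := (card_inter_bounds_of_walk w j).1 hj
    have : m < j := Nat.lt_of_mul_lt_mul_left (a := r) (by omega)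
    omega
  · have := (card_inter_bounds_of_walk w j).2 hj
    have : m < j := Nat.lt_of_mul_lt_mul_left (a := r) (by omega)
    omega

lemma exists_adj_superset (hk : k ≠ 0) (A : {A : Finset (Fin (2 * k + r)) // A.card = k})
    {X : Finset (Fin (2 * k + r))} (hXA : Disjoint X A.1) (hX : #X ≤ k) :
    ∃ C, (kneserGraph (2 * k + r) k).Adj A C ∧ X ⊆ C.1 := by
  have hXA' : X ⊆ A.1ᶜ := subset_compl_iff_disjoint_right.mpr hXA
  obtain ⟨C, hXC, hCA, hC⟩ := exists_subsuperset_card_eq hXA' hX (by rw [card_compl]; omega)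
  exact ⟨⟨C, hC⟩, adj_of_disjoint hk (disjoint_of_subset_right hCA disjoint_compl_right), hXC⟩

lemma exists_adj_le_card_inter_add (hk : k ≠ 0)
    (A B : {A : Finset (Fin (2 * k + r)) // A.card = k}) :
    ∃ C, (kneserGraph (2 * k + r) k).Adj A C ∧ k ≤ #(C.1 ∩ B.1) + #(A.1 ∩ B.1) := by
  have hB := card_sdiff_add_card_inter B.1 A.1
  rw [B.2, inter_comm] at hB
  obtain ⟨C, hAC, hBC⟩ := exists_adj_superset hk A (X := B.1 \ A.1) sdiff_disjoint (by omega)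
  refine ⟨C, hAC, ?_⟩
  have := card_le_card (subset_inter hBC sdiff_subset)
  omega

/-- A neighbour of `A` chosen as far from `B` as possible, i.e. containing as much of
`(A ∪ B)ᶜ`, which has `r + |A ∩ B|` elements, as it can. -/
lemma exists_adj_card_inter_le (hk : k ≠ 0)
    (A B : {A : Finset (Fin (2 * k + r)) // A.card = k}) :
    ∃ C, (kneserGraph (2 * k + r) k).Adj A C ∧ #(C.1 ∩ B.1) ≤ k - (r + #(A.1 ∩ B.1)) := by
  have hfar : #(A.1 ∪ B.1)ᶜ = r + #(A.1 ∩ B.1) := by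
    have := card_union_add_card_inter A.1 B.1
    rw [Finset.card_compl, Fintype.card_fin, A.2, B.2] at *
    omega
  obtain ⟨X, hX, hXcard⟩ := exists_subset_card_eq (s := (A.1 ∪ B.1)ᶜ)
    (n := min k (r + #(A.1 ∩ B.1))) (by rw [hfar]; exact min_le_right _ _)
  have hXAB : Disjoint X (A.1 ∪ B.1) := subset_compl_iff_disjoint_right.mp hX
  obtain ⟨C, hAC, hXC⟩ := exists_adj_superset hk A (hXAB.mono_right subset_union_left)
    (by rw [hXcard]; exact min_le_left _ _)
  refine ⟨C, hAC, ?_⟩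
  have := card_le_card (subset_sdiff.mpr ⟨hXC, hXAB.mono_right subset_union_right⟩)
  have := card_inter_add_card_sdiff C.1 B.1
  rw [C.2] at this
  omega

lemma eq_of_le_card_inter {A B : {A : Finset (Fin n) // A.card = k}} (h : k ≤ #(A.1 ∩ B.1)) :
    A = B := by
  have hA : A.1 ∩ B.1 = A.1 := eq_of_subset_of_card_le inter_subset_left (by rw [A.2]; exact h)
  exact Subtype.ext <| eq_of_subset_of_card_le (inter_eq_left.mp hA) (by rw [A.2, B.2])

lemma exists_walk_length_le_two_mul (hk : k ≠ 0) :
    ∀ (m : ℕ) (A B : {A : Finset (Fin (2 * k + r)) // A.card = k}),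
      k ≤ #(A.1 ∩ B.1) + r * m → ∃ w : (kneserGraph (2 * k + r) k).Walk A B, w.length ≤ 2 * m
  | 0, A, B, h => by
    obtain rfl := eq_of_le_card_inter (by simpa using h)
    exact ⟨Walk.nil, by simp⟩
  | m + 1, A, B, h => by
    obtain ⟨C, hAC, hC⟩ := exists_adj_card_inter_le hk A B
    obtain ⟨D, hCD, hD⟩ := exists_adj_le_card_inter_add hk C B
    obtain ⟨w, hw⟩ := exists_walk_length_le_two_mul hk m D B (by rw [Nat.mul_succ] at h; omega)
    exact ⟨.cons hAC (.cons hCD w), by simp; omega⟩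

lemma dist_le_two_mul (hk : k ≠ 0) {A B : {A : Finset (Fin (2 * k + r)) // A.card = k}} {m : ℕ}
    (h : k ≤ #(A.1 ∩ B.1) + r * m) : (kneserGraph (2 * k + r) k).dist A B ≤ 2 * m :=
  let ⟨w, hw⟩ := exists_walk_length_le_two_mul hk m A B h
  (dist_le w).trans hw

lemma dist_le_two_mul_add_one (hk : k ≠ 0) {A B : {A : Finset (Fin (2 * k + r)) // A.card = k}}
    {m : ℕ} (h : #(A.1 ∩ B.1) ≤ r * m) : (kneserGraph (2 * k + r) k).dist A B ≤ 2 * m + 1 := by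
  obtain ⟨C, hAC, hC⟩ := exists_adj_le_card_inter_add hk A B
  obtain ⟨w, hw⟩ := exists_walk_length_le_two_mul hk m C B (by omega)
  exact (dist_le (.cons hAC w)).trans (by simp; omega)

end kneserGraph

open kneserGraph in
theorem stmt6_general (k r p : ℕ) (hrk : r < k - 1) (hp : 1 ≤ p)
    (hdiam : (kneserGraph (2 * k + r) k).diam = 2 * p)
    (A B : {A : Finset (Fin (2 * k + r)) // A.card = k}) :
    (kneserGraph (2 * k + r) k).dist A B = 2 * p ↔
      r * p - r + 1 ≤ (A.1 ∩ B.1).card ∧ (A.1 ∩ B.1).card ≤ k - r * p + r - 1 := by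
  obtain ⟨m, rfl⟩ : ∃ m, p = m + 1 := ⟨p - 1, by omega⟩
  have hk0 : k ≠ 0 := by omega
  have hdiam0 : (kneserGraph (2 * k + r) k).diam ≠ 0 := by omega
  have hfin := ediam_ne_top_of_diam_ne_zero hdiam0
  have := nontrivial_of_diam_ne_zero hdiam0
  have hfar : ∀ A B : {A : Finset (Fin (2 * k + r)) // A.card = k},
      (kneserGraph (2 * k + r) k).dist A B = 2 * (m + 1) →
        r * m < #(A.1 ∩ B.1) ∧ #(A.1 ∩ B.1) + r * m < k := fun A B h =>
    ⟨not_le.mp fun h' => by have := dist_le_two_mul_add_one hk0 h'; omega,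
      not_le.mp fun h' => by have := dist_le_two_mul hk0 (m := m) (by omega); omega⟩
  -- makes the truncated subtractions in the statement exact
  have hkm : r * (m + 1) ≤ k := by
    obtain ⟨u, v, huv⟩ := exists_dist_eq_diam (G := kneserGraph (2 * k + r) k)
    have := hfar u v (huv.trans hdiam)
    rcases m with _ | m
    · omega
    · nlinarith
  have hmul : r * (m + 1) = r * m + r := Nat.mul_succ r m
  refine ⟨fun h => ?_, fun h => ?_⟩
  · have := hfar A B h
    omega
  · exact le_antisymm (hdiam ▸ dist_le_diam hfin :)
      (two_mul_add_two_le_dist ((connected_of_ediam_ne_top hfin) A B) (by omega) (by omega))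

theorem stmt6 (k r p : ℕ) (hk : 2 ≤ k) (hr : 1 ≤ r) (hrk : r < k - 1) (hp : 1 ≤ p)
    (hnd : ¬ r ∣ (k - 1)) (hdiam : (kneserGraph (2 * k + r) k).diam = 2 * p)
    (A B : {A : Finset (Fin (2 * k + r)) // A.card = k}) :
    (kneserGraph (2 * k + r) k).dist A B = 2 * p ↔
      r * p - r + 1 ≤ (A.1 ∩ B.1).card ∧ (A.1 ∩ B.1).card ≤ k - r * p + r - 1 :=
  stmt6_general k r p hrk hp hdiam A B
end

section
/- Let k ≥ 2 be a positive integer and let 1 < d ≤ k. Two k-subsets A, B of [2k+1] are at distance exactly d in the Kneser graph K(2k+1,k) if and only if |A ∩ B| = k - d/2 when d is even, and |A ∩ B| = (d-1)/2 when d is odd. -/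
/-!
Write `s = |A ∩ B|`. Along an edge `X ~ Y` of `K(2k+1, k)` the union `X ∪ Y` misses a single
point, so `|X ∩ B| + |Y ∩ B|` is `k - 1` or `k`. Walking back from `B`, this yields the
parity-dependent lower bounds `ℓ ≥ 2(k - s)` for walks of even length and `ℓ ≥ 2s + 1` for
walks of odd length. Both are attained: replacing one point of `B` costs two steps (through the
complement of `B` minus the new point), which lets us either grow or shrink `A ∩ B` by one.
Hence `dist A B = min (2|A \ B|) (2|A ∩ B| + 1)`, and the theorem is arithmetic.
-/

open Finset SimpleGraph

section Card

variable {α : Type*} [DecidableEq α]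

theorem Finset.card_inter_add_card_inter_le_of_disjoint {X Y : Finset α} (B : Finset α)
    (h : Disjoint X Y) : #(X ∩ B) + #(Y ∩ B) ≤ #B := by
  rw [← card_union_of_disjoint (h.mono inter_subset_left inter_subset_left),
    ← union_inter_distrib_right]
  exact card_le_card inter_subset_right

theorem Finset.card_le_card_inter_add_card_inter_add_card_compl [Fintype α] (X Y B : Finset α) :
    #B ≤ #(X ∩ B) + #(Y ∩ B) + #(X ∪ Y)ᶜ :=
  calc #B ≤ #(X ∩ B ∪ Y ∩ B ∪ (X ∪ Y)ᶜ) := card_le_card fun b hb => by simp; tauto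
    _ ≤ #(X ∩ B ∪ Y ∩ B) + #(X ∪ Y)ᶜ := card_union_le _ _
    _ ≤ #(X ∩ B) + #(Y ∩ B) + #(X ∪ Y)ᶜ := by gcongr; exact card_union_le _ _

end Card

abbrev KneserVertex (n k : ℕ) := {A : Finset (Fin n) // #A = k}

section Kneser

variable {n k : ℕ}

theorem kneserGraph_adj_of_disjoint {A B : KneserVertex n k} (h : Disjoint A.1 B.1)
    (hA : A.1.Nonempty) : (kneserGraph n k).Adj A B := by
  refine ⟨fun hAB => ?_, h⟩
  subst hAB
  exact hA.ne_empty ((disjoint_self_iff_empty _).1 h)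

theorem KneserVertex.eq_of_subset {A B : KneserVertex n k} (h : A.1 ⊆ B.1) : A = B :=
  Subtype.ext (eq_of_subset_of_card_le h (by rw [A.2, B.2]))

theorem kneserGraph_exists_walk_insert_erase (B : KneserVertex (2 * k + 1) k)
    {x y : Fin (2 * k + 1)} (hx : x ∉ B.1) (hy : y ∈ B.1) :
    ∃ B' : KneserVertex (2 * k + 1) k, B'.1 = insert x (B.1.erase y) ∧
      ∃ p : (kneserGraph (2 * k + 1) k).Walk B' B, p.length = 2 := by
  have hxB : x ∉ B.1.erase y := fun h => hx (mem_of_mem_erase h)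
  let B' : KneserVertex (2 * k + 1) k := ⟨insert x (B.1.erase y), by
    rw [card_insert_of_notMem hxB, card_erase_of_mem hy, B.2]
    have := card_pos.2 ⟨y, hy⟩
    omega⟩
  have hxc : x ∈ B.1ᶜ := mem_compl.2 hx
  let C : KneserVertex (2 * k + 1) k := ⟨B.1ᶜ.erase x, by
    rw [card_erase_of_mem hxc, card_compl, Fintype.card_fin, B.2]
    omega⟩
  have hB'C : (kneserGraph (2 * k + 1) k).Adj B' C := by
    refine kneserGraph_adj_of_disjoint (disjoint_left.2 fun a ha haC => ?_)
      ⟨x, mem_insert_self _ _⟩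
    obtain ⟨hax, haB⟩ := mem_erase.1 haC
    rcases mem_insert.1 ha with rfl | ha
    · exact hax rfl
    · exact mem_compl.1 haB (mem_of_mem_erase ha)
  have hCB : (kneserGraph (2 * k + 1) k).Adj C B :=
    (kneserGraph_adj_of_disjoint (disjoint_left.2 fun a ha haC =>
      mem_compl.1 (mem_of_mem_erase haC) ha) ⟨y, hy⟩).symm
  exact ⟨B', rfl, .cons hB'C (.cons hCB .nil), rfl⟩

theorem kneserGraph_exists_walk_length_le_two_mul_card_sdiff (A B : KneserVertex (2 * k + 1) k) :
    ∃ p : (kneserGraph (2 * k + 1) k).Walk A B, p.length ≤ 2 * #(A.1 \ B.1) := by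
  induction h : #(A.1 \ B.1) generalizing B with
  | zero =>
    obtain rfl := KneserVertex.eq_of_subset (sdiff_eq_empty_iff_subset.1 (card_eq_zero.1 h))
    exact ⟨.nil, le_rfl⟩
  | succ m ih =>
    have hBA := (card_sdiff_comm (B.2.trans A.2.symm)).trans h
    obtain ⟨x, hx⟩ := card_pos.1 (by omega : 0 < #(A.1 \ B.1))
    obtain ⟨y, hy⟩ := card_pos.1 (by omega : 0 < #(B.1 \ A.1))
    obtain ⟨hxA, hxB⟩ := mem_sdiff.1 hx
    obtain ⟨hyB, hyA⟩ := mem_sdiff.1 hy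
    obtain ⟨B', hB', q, hq⟩ := kneserGraph_exists_walk_insert_erase B hxB hyB
    have hAB' : A.1 \ B'.1 = (A.1 \ B.1).erase x := by
      ext a
      simp only [hB', mem_sdiff, mem_insert, mem_erase]
      grind
    obtain ⟨p, hp⟩ := ih B' (by rw [hAB', card_erase_of_mem hx, h]; rfl)
    exact ⟨p.append q, by rw [Walk.length_append]; omega⟩

theorem kneserGraph_exists_walk_length_le_two_mul_card_inter_add_one
    (A B : KneserVertex (2 * k + 1) k) :
    ∃ p : (kneserGraph (2 * k + 1) k).Walk A B, p.length ≤ 2 * #(A.1 ∩ B.1) + 1 := by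
  induction h : #(A.1 ∩ B.1) generalizing B with
  | zero =>
    by_cases hAB : A = B
    · subst hAB
      exact ⟨.nil, by simp⟩
    · have hdisj : Disjoint A.1 B.1 := disjoint_iff_inter_eq_empty.2 (card_eq_zero.1 h)
      exact ⟨.cons ⟨hAB, hdisj⟩ .nil, le_rfl⟩
  | succ m ih =>
    obtain ⟨y, hy⟩ := card_pos.1 (by omega : 0 < #(A.1 ∩ B.1))
    obtain ⟨hyA, hyB⟩ := mem_inter.1 hy
    have hunion : #(A.1 ∪ B.1) < #(univ : Finset (Fin (2 * k + 1))) := by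
      have := card_union_le A.1 B.1
      rw [A.2, B.2] at this
      rw [card_univ, Fintype.card_fin]
      omega
    obtain ⟨x, -, hx⟩ := exists_mem_notMem_of_card_lt_card hunion
    obtain ⟨B', hB', q, hq⟩ :=
      kneserGraph_exists_walk_insert_erase B (fun h => hx (mem_union_right _ h)) hyB
    have hAB' : A.1 ∩ B'.1 = (A.1 ∩ B.1).erase y := by
      ext a
      simp only [hB', mem_inter, mem_insert, mem_erase]
      grind
    obtain ⟨p, hp⟩ := ih B' (by rw [hAB', card_erase_of_mem hy, h]; rfl)
    exact ⟨p.append q, by rw [Walk.length_append]; omega⟩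

theorem kneserGraph_walk_length_lower_bounds {X B : KneserVertex (2 * k + 1) k}
    (p : (kneserGraph (2 * k + 1) k).Walk X B) :
    (Even p.length → 2 * k ≤ 2 * #(X.1 ∩ B.1) + p.length) ∧
      (Odd p.length → 2 * #(X.1 ∩ B.1) + 1 ≤ p.length) := by
  induction p with
  | @nil u => simp [u.2]
  | @cons X Y B hXY q ih =>
    have hle := card_inter_add_card_inter_le_of_disjoint B.1 hXY.2
    have hge := card_le_card_inter_add_card_inter_add_card_compl X.1 Y.1 B.1
    have hcompl : #(X.1 ∪ Y.1)ᶜ = 1 := by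
      rw [card_compl, Fintype.card_fin, card_union_of_disjoint hXY.2, X.2, Y.2]
      omega
    rw [Walk.length_cons, Nat.even_add_one, Nat.odd_add_one, Nat.not_even_iff_odd]
    rcases Nat.even_or_odd q.length with he | ho
    · have := ih.1 he
      exact ⟨fun ho => absurd he (Nat.not_even_iff_odd.2 ho), fun _ => by omega⟩
    · have := ih.2 ho
      exact ⟨fun _ => by omega, fun hno => absurd ho hno⟩

theorem kneserGraph_dist_eq (A B : KneserVertex (2 * k + 1) k) :
    (kneserGraph (2 * k + 1) k).dist A B = min (2 * #(A.1 \ B.1)) (2 * #(A.1 ∩ B.1) + 1) := by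
  obtain ⟨pe, hpe⟩ := kneserGraph_exists_walk_length_le_two_mul_card_sdiff A B
  obtain ⟨po, hpo⟩ := kneserGraph_exists_walk_length_le_two_mul_card_inter_add_one A B
  obtain ⟨p, hp⟩ := Reachable.exists_walk_length_eq_dist ⟨pe⟩
  have hue := (dist_le pe).trans hpe
  have huo := (dist_le po).trans hpo
  have hsplit := card_inter_add_card_sdiff A.1 B.1
  rw [A.2] at hsplit
  obtain ⟨hl_even, hl_odd⟩ := kneserGraph_walk_length_lower_bounds p
  rw [hp] at hl_even hl_odd
  rcases Nat.even_or_odd ((kneserGraph (2 * k + 1) k).dist A B) with ⟨m, hm⟩ | ⟨m, hm⟩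
  · have := hl_even ⟨m, hm⟩
    omega
  · have := hl_odd ⟨m, hm⟩
    omega

end Kneser

theorem stmt9_general (k d : ℕ) (hd2 : d ≤ k)
    (A B : {A : Finset (Fin (2 * k + 1)) // A.card = k}) :
    (kneserGraph (2 * k + 1) k).dist A B = d ↔
      (A.1 ∩ B.1).card = (if Even d then k - d / 2 else (d - 1) / 2) := by
  have hsplit := card_inter_add_card_sdiff A.1 B.1
  rw [A.2] at hsplit
  rw [kneserGraph_dist_eq]
  split_ifs with hd
  · obtain ⟨m, rfl⟩ := hd
    omega
  · obtain ⟨m, rfl⟩ := Nat.not_even_iff_odd.1 hd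
    omega

theorem stmt9 (k d : ℕ) (hk : 2 ≤ k) (hd1 : 1 < d) (hd2 : d ≤ k)
    (A B : {A : Finset (Fin (2 * k + 1)) // A.card = k}) :
    (kneserGraph (2 * k + 1) k).dist A B = d ↔
      (A.1 ∩ B.1).card = (if Even d then k - d / 2 else (d - 1) / 2) :=
  stmt9_general k d hd2 A B
end
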